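/- If λ and μ are partitions of n and φ : G_λ → G_μ is an isomorphism of signed, colored graphs between the standard dual equivalence graphs, then λ = μ and φ is the identity map. In particular, the standard dual equivalence graphs are pairwise non-isomorphic and have no nontrivial automorphisms. -/

import Mathlib

open scoped Classical

noncomputable section

/-! ### Signed, colored graphs -/

/-- A signed, colored graph of type `(n, N)`: a vertex set `V`, a signature
function `σ : V → {±1}^(N-1)` (encoded as a function `ℕ → ℤ` whose values are `±1`
for `1 ≤ i ≤ N-1`), and for each `1 < i < n` a set of edges `E_i` (encoded as a
symmetric irreflexive relation). -/
structure SCG (V : Type) (n N : ℕ) where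
  sgn : V → ℕ → ℤ
  edge : ℕ → V → V → Prop
  sgn_pm : ∀ v i, 1 ≤ i → i < N → sgn v i = 1 ∨ sgn v i = -1
  edge_symm : ∀ i v w, edge i v w → edge i w v
  edge_ne : ∀ i v w, edge i v w → v ≠ w
  edge_supp : ∀ i v w, edge i v w → 1 < i ∧ i < n

namespace SCG

variable {V W : Type} {n N n' N' : ℕ}

/-- Reachability using edges whose colors lie in `S`. -/
def ReachS (G : SCG V n N) (S : Set ℕ) (v w : V) : Prop :=
  Relation.ReflTransGen (fun a b => ∃ i ∈ S, G.edge i a b) v w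

/-- Reachability using all edges. -/
def Reach (G : SCG V n N) (v w : V) : Prop :=
  Relation.ReflTransGen (fun a b => ∃ i, G.edge i a b) v w

/-- The connected component of `v0`, as a signed colored graph. -/
def component (G : SCG V n N) (v0 : V) : SCG {v : V // G.Reach v0 v} n N where
  sgn v := G.sgn v.1
  edge i v w := G.edge i v.1 w.1
  sgn_pm v := G.sgn_pm v.1
  edge_symm i v w h := G.edge_symm i v.1 w.1 h
  edge_ne i v w h hvw := G.edge_ne i v.1 w.1 h (congrArg Subtype.val hvw)
  edge_supp i v w h := G.edge_supp i v.1 w.1 h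

/-- The `(m, M)`-restriction of a signed colored graph: keep the vertex set,
truncate the signature (i.e. only promise values on `1 ≤ i ≤ M-1`), and
keep only the edges `E_2, …, E_(m-1)`. -/
def restrict (G : SCG V n N) (m M : ℕ) (hm : m ≤ n) (hM : M ≤ N) : SCG V m M where
  sgn := G.sgn
  edge i v w := i < m ∧ G.edge i v w
  sgn_pm v i h1 h2 := G.sgn_pm v i h1 (lt_of_lt_of_le h2 hM)
  edge_symm i v w h := ⟨h.1, G.edge_symm i v w h.2⟩
  edge_ne i v w h := G.edge_ne i v w h.2
  edge_supp i v w h := ⟨(G.edge_supp i v w h.2).1, h.1⟩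

/-- A morphism of signed colored graphs of the same type: preserves all
signature coordinates and all colored edges. -/
def IsMorphism (G : SCG V n N) (H : SCG W n N) (φ : V → W) : Prop :=
  (∀ v i, 1 ≤ i → i < N → H.sgn (φ v) i = G.sgn v i) ∧
  ∀ i v w, G.edge i v w → H.edge i (φ v) (φ w)

/-- Isomorphism of signed colored graphs: a bijective morphism. -/
def Isomorphic (G : SCG V n N) (H : SCG W n N) : Prop :=
  ∃ φ : V → W, IsMorphism G H φ ∧ Function.Bijective φ

/-- An isomorphism of edge-colored graphs between the connected component of `v0`
in `G` using the colors in `S`, and the connected component of `u0` in `H` using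
the colors `r '' S`, matching each color `i ∈ S` with the color `r i`. -/
def ColorIso (G : SCG V n N) (v0 : V) (H : SCG W n' N') (u0 : W)
    (r : ℕ → ℕ) (S : Set ℕ) : Prop :=
  ∃ f : {v : V // G.ReachS S v0 v} → {u : W // H.ReachS (r '' S) u0 u},
    Function.Bijective f ∧ ∀ i ∈ S, ∀ a b, G.edge i a.1 b.1 ↔ H.edge (r i) (f a).1 (f b).1

/-- Dual equivalence axiom 1. -/
def Ax1 (G : SCG V n N) : Prop :=
  ∀ i, 1 < i → i < n → ∀ w, (G.sgn w (i - 1) = -G.sgn w i ↔ ∃! x, G.edge i w x)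

/-- Dual equivalence axiom 2. -/
def Ax2 (G : SCG V n N) : Prop :=
  ∀ i v w, G.edge i v w →
    G.sgn v (i - 1) = -G.sgn w (i - 1) ∧ G.sgn v i = -G.sgn w i ∧
      ∀ h, h + 2 < i ∨ i + 1 < h → G.sgn v h = G.sgn w h

/-- Dual equivalence axiom 3. -/
def Ax3 (G : SCG V n N) : Prop :=
  ∀ i v w, G.edge i v w →
    (G.sgn v (i - 2) = -G.sgn w (i - 2) → G.sgn v (i - 2) = -G.sgn v (i - 1)) ∧
    (G.sgn v (i + 1) = -G.sgn w (i + 1) → G.sgn v (i + 1) = -G.sgn v i)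

/-- Dual equivalence axiom 5. -/
def Ax5 (G : SCG V n N) : Prop :=
  ∀ i j w x y, G.edge i w x → G.edge j x y → i + 3 ≤ j ∨ j + 3 ≤ i →
    ∃ v, G.edge j w v ∧ G.edge i v y

/-- Dual equivalence axiom 6 : any two vertices of a connected component of
`E_2 ∪ ⋯ ∪ E_i` may be joined by a path crossing at most one `E_i` edge. -/
def Ax6 (G : SCG V n N) : Prop :=
  ∀ i, 1 < i → i < n → ∀ v w : V, G.ReachS (Set.Icc 2 i) v w →
    ∃ u u', G.ReachS (Set.Icc 2 (i - 1)) v u ∧ (u = u' ∨ G.edge i u u') ∧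
      G.ReachS (Set.Icc 2 (i - 1)) u' w

end SCG

/-! ### Standard Young tableaux and the standard dual equivalence graph -/

/-- A standard Young tableau of shape `μ`, recorded by the function sending
`k : Fin μ.card` to the cell containing the entry `k+1`.  (Cells are in matrix
coordinates `(row, column)`; entries increase along rows and along columns.) -/
structure SYT (μ : YoungDiagram) where
  cellOf : Fin μ.card → ℕ × ℕ
  mem_cells : ∀ k, cellOf k ∈ μ.cells
  inj : Function.Injective cellOf
  row_mono : ∀ k l, (cellOf k).1 = (cellOf l).1 → (cellOf k).2 < (cellOf l).2 → k < l
  col_mono : ∀ k l, (cellOf k).2 = (cellOf l).2 → (cellOf k).1 < (cellOf l).1 → k < l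

instance (μ : YoungDiagram) : Finite (SYT μ) := by
  apply Finite.of_injective
    (fun T : SYT μ => fun k => (⟨T.cellOf k, T.mem_cells k⟩ : {x : ℕ × ℕ // x ∈ μ.cells}))
  intro T U h
  cases T; cases U
  simp only [SYT.mk.injEq]
  funext k
  exact congrArg Subtype.val (congrFun h k)

/-- The content of a cell: `column - row`. -/
def cellContent (x : ℕ × ℕ) : ℤ := (x.2 : ℤ) - (x.1 : ℤ)

/-- `x` comes before `y` in the content reading order: smaller content first,
and within a diagonal, southwest to northeast. -/
def readBefore (x y : ℕ × ℕ) : Prop :=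
  cellContent x < cellContent y ∨ (cellContent x = cellContent y ∧ x.2 < y.2)

/-- The cell containing the entry `a` (for `1 ≤ a ≤ μ.card`). -/
def SYT.cell {μ : YoungDiagram} (T : SYT μ) (a : ℕ) : ℕ × ℕ :=
  if h : 1 ≤ a ∧ a ≤ μ.card then T.cellOf ⟨a - 1, by omega⟩ else (0, 0)

/-- The descent signature of a standard tableau: `σ(T)_i = +1` iff `i` appears
before `i+1` in the content reading word. -/
def sytSgn {μ : YoungDiagram} (T : SYT μ) : ℕ → ℤ := fun i =>
  if readBefore (T.cell i) (T.cell (i + 1)) then 1 else -1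

/-- The entry `b` lies between the entries `a` and `c` in the content reading
word of `T`. -/
def posBetween {μ : YoungDiagram} (T : SYT μ) (a b c : ℕ) : Prop :=
  (readBefore (T.cell a) (T.cell b) ∧ readBefore (T.cell b) (T.cell c)) ∨
  (readBefore (T.cell c) (T.cell b) ∧ readBefore (T.cell b) (T.cell a))

/-- `U` is obtained from `T` by exchanging the cells of the entries `a`, `b`. -/
def swapEq {μ : YoungDiagram} (T U : SYT μ) (a b : ℕ) : Prop :=
  ∀ x, 1 ≤ x → x ≤ μ.card →
    U.cell x = if x = a then T.cell b else if x = b then T.cell a else T.cell x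

/-- The elementary dual equivalence for `i-1, i, i+1`: the middle letter (in
reading order) of `i-1, i, i+1` is not `i`, and the outer two letters are
exchanged. -/
def stdEdgeCore (μ : YoungDiagram) (i : ℕ) (T U : SYT μ) : Prop :=
  1 < i ∧ i < μ.card ∧
    ((posBetween T i (i + 1) (i - 1) ∧ swapEq T U (i - 1) i) ∨
     (posBetween T i (i - 1) (i + 1) ∧ swapEq T U i (i + 1)))

/-- The standard dual equivalence graph `G_μ` for a partition `μ` of `n`. -/
def stdDEG (n : ℕ) (μ : YoungDiagram) (hcard : μ.card = n) : SCG (SYT μ) n n where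
  sgn T := sytSgn T
  edge i T U := T ≠ U ∧ (stdEdgeCore μ i T U ∨ stdEdgeCore μ i U T)
  sgn_pm := by
    intro v i _ _
    simp only [sytSgn]
    split
    · exact Or.inl rfl
    · exact Or.inr rfl
  edge_symm := by
    rintro i T U ⟨h1, h2⟩
    exact ⟨h1.symm, h2.symm⟩
  edge_ne := fun i T U h => h.1
  edge_supp := by
    rintro i T U ⟨h1, h2 | h2⟩ <;> exact ⟨h2.1, hcard ▸ h2.2.1⟩

namespace SCG

variable {V W : Type} {n N : ℕ}

/-- Dual equivalence axiom 4 : every connected component of `E_(i-1) ∪ E_i` is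
isomorphic, as an edge-colored graph, to a connected component of the
restriction to colors `{2,3}` (relabelled `i-1, i`) of a standard dual
equivalence graph `G_μ` with `μ ⊢ 4`; and similarly for three colors and
partitions of `5`. -/
def Ax4 (G : SCG V n N) : Prop :=
  (∀ i, 2 < i → i < n → ∀ v0 : V, ∃ (μ : YoungDiagram) (h4 : μ.card = 4) (T0 : SYT μ),
      G.ColorIso v0 (stdDEG 4 μ h4) T0 (· + 3 - i) {i - 1, i}) ∧
  (∀ i, 3 < i → i < n → ∀ v0 : V, ∃ (μ : YoungDiagram) (h5 : μ.card = 5) (T0 : SYT μ),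
      G.ColorIso v0 (stdDEG 5 μ h5) T0 (· + 4 - i) {i - 2, i - 1, i})

/-- A dual equivalence graph of type `(n,N)`. -/
def IsDEG (G : SCG V n N) : Prop :=
  n ≤ N ∧ G.Ax1 ∧ G.Ax2 ∧ G.Ax3 ∧ G.Ax4 ∧ G.Ax5 ∧ G.Ax6

end SCG

/-! ### Quasisymmetric functions and Schur functions -/

/-- Gessel's fundamental quasisymmetric function `Q_σ` of degree `n`, for a
signature `s` (with `s j` the sign `σ_j` for `1 ≤ j ≤ n-1`), as a formal power
series in the variables `x_0, x_1, x_2, …` (representing `x_1, x_2, …`).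
It is the sum of `x_(i_1) ⋯ x_(i_n)` over weakly increasing sequences
`i_1 ≤ ⋯ ≤ i_n` such that `i_j = i_(j+1)` forces `σ_j = +1`. -/
def Qfun (R : Type) [CommRing R] (n : ℕ) (s : ℕ → ℤ) : MvPowerSeries ℕ R := fun d =>
  ((Set.ncard {f : Fin n → ℕ | Monotone f ∧
      (∀ (j : ℕ) (hj : j < n), 1 ≤ j → f ⟨j - 1, by omega⟩ = f ⟨j, hj⟩ → s j = 1) ∧
      ∑ k : Fin n, Finsupp.single (f k) 1 = d} : ℕ) : R)

/-- The Schur function `s_μ = Σ_(T ∈ SYT(μ)) Q_(σ(T))`. -/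
def schurPS (R : Type) [CommRing R] (μ : YoungDiagram) : MvPowerSeries ℕ R :=
  ∑ᶠ T : SYT μ, Qfun R μ.card (sytSgn T)

/-- Symmetry of a formal power series in `x_0, x_1, …`: invariance of the
coefficients under every permutation of the variables. -/
def MvPSSymmetric {R : Type} [CommRing R] (F : MvPowerSeries ℕ R) : Prop :=
  ∀ (g : Equiv.Perm ℕ) (d : ℕ →₀ ℕ),
    MvPowerSeries.coeff (Finsupp.equivMapDomain g d) F = MvPowerSeries.coeff d F

/-- Schur positivity: `F` is a nonnegative integer combination of Schur functions. -/
def SchurPositive (F : MvPowerSeries ℕ ℤ) : Prop :=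
  ∃ a : YoungDiagram → ℕ, (Function.support a).Finite ∧
    F = ∑ᶠ μ : YoungDiagram, (a μ : ℤ) • schurPS ℤ μ

/-! ### Words, ribbon words and the LLT graphs -/

/-- A standard word of length `n`: a bijection from positions `1,…,n` to
letters `1,…,n` (and `0` outside this range). -/
def IsStdWord (n : ℕ) (w : ℕ → ℕ) : Prop :=
  Set.BijOn w (Set.Icc 1 n) (Set.Icc 1 n) ∧ ∀ p, p ∉ Set.Icc 1 n → w p = 0

/-- A word of positive integers of length `n`. -/
def IsPosWord (n : ℕ) (w : ℕ → ℕ) : Prop :=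
  (∀ p ∈ Set.Icc 1 n, 1 ≤ w p) ∧ ∀ p, p ∉ Set.Icc 1 n → w p = 0

/-- The `k`-descent set of the pair `(w, c)` (as a set of pairs of positions). -/
def DesK (k n : ℕ) (w : ℕ → ℕ) (c : ℕ → ℤ) : Set (ℕ × ℕ) :=
  {pq : ℕ × ℕ | pq.1 ∈ Set.Icc 1 n ∧ pq.2 ∈ Set.Icc 1 n ∧ w pq.2 < w pq.1 ∧
    c pq.2 - c pq.1 = (k : ℤ)}

/-- The set of `k`-inversions of the pair `(w, c)`. -/
def InvK (k n : ℕ) (w : ℕ → ℕ) (c : ℕ → ℤ) : Set (ℕ × ℕ) :=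
  {pq : ℕ × ℕ | pq.1 ∈ Set.Icc 1 n ∧ pq.2 ∈ Set.Icc 1 n ∧ w pq.2 < w pq.1 ∧
    0 < c pq.2 - c pq.1 ∧ c pq.2 - c pq.1 < (k : ℤ)}

/-- The `k`-inversion number of `(w, c)`. -/
def invK (k n : ℕ) (w : ℕ → ℕ) (c : ℕ → ℤ) : ℕ := (InvK k n w c).ncard

/-- The pair `(w, c)` is a `k`-ribbon word. -/
def IsRibbonWord (k n : ℕ) (w : ℕ → ℕ) (c : ℕ → ℤ) : Prop :=
  ∀ p, 1 ≤ p → p + 1 ≤ n → c p = c (p + 1) →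
    (∃ h, h ∈ Set.Icc 1 n ∧ c h = c p - (k : ℤ) ∧ w p < w h ∧ w h ≤ w (p + 1)) ∧
    (∃ j, j ∈ Set.Icc 1 n ∧ c j = c p + (k : ℤ) ∧ w p ≤ w j ∧ w j < w (p + 1))

/-- The letter `a` appears to the left of the letter `b` in the word `w`. -/
def leftOf (n : ℕ) (w : ℕ → ℕ) (a b : ℕ) : Prop :=
  ∃ p q, p ∈ Set.Icc 1 n ∧ q ∈ Set.Icc 1 n ∧ p < q ∧ w p = a ∧ w q = b

/-- The descent signature of a word: `σ(w)_i = +1` iff `i` is left of `i+1`. -/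
def wordSgn (n : ℕ) (w : ℕ → ℕ) : ℕ → ℤ := fun i =>
  if leftOf n w i (i + 1) then 1 else -1

/-- The position of the letter `ℓ` in the word `w`. -/
def posOf (n : ℕ) (w : ℕ → ℕ) (ℓ : ℕ) : ℕ := sInf {p | p ∈ Set.Icc 1 n ∧ w p = ℓ}

/-- The involution `D_i^(k)` on standard words: if `i` lies between `i-1` and
`i+1` do nothing; otherwise apply `d_i` (switch the outer two of the letters
`i-1, i, i+1`) when `dist(i-1,i,i+1) > k`, and `d̃_i` (cycle the three letters
among their positions) when `dist(i-1,i,i+1) ≤ k`. -/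
def Dk (k n : ℕ) (c : ℕ → ℤ) (i : ℕ) (w : ℕ → ℕ) : ℕ → ℕ :=
  let p := posOf n w (i - 1)
  let q := posOf n w i
  let r := posOf n w (i + 1)
  if (p < q ∧ q < r) ∨ (r < q ∧ q < p) then w
  else
    let s1 := min p (min q r)
    let s3 := max p (max q r)
    let s2 := p + q + r - s1 - s3
    if (k : ℤ) < max |c p - c q| (max |c q - c r| |c p - c r|) then
      fun t => if t = s1 then w s3 else if t = s3 then w s1 else w t
    else if q = s1 then
      fun t => if t = s1 then w s2 else if t = s2 then w s3 else if t = s3 then w s1 else w t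
    else
      fun t => if t = s1 then w s3 else if t = s2 then w s1 else if t = s3 then w s2 else w t

/-- The vertex set `V^(k)_(c,D)`: standard `k`-ribbon words with content
vector `c` and `k`-descent set `D`. -/
def lltV (k n : ℕ) (c : ℕ → ℤ) (D : Set (ℕ × ℕ)) : Type :=
  {w : ℕ → ℕ // IsStdWord n w ∧ IsRibbonWord k n w c ∧ DesK k n w c = D}

instance lltV.finite (k n : ℕ) (c : ℕ → ℤ) (D : Set (ℕ × ℕ)) : Finite (lltV k n c D) := by
  apply Finite.of_injective
    (fun w : lltV k n c D => fun p : Fin (n + 1) => (⟨w.1 p, by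
      rcases Classical.em ((p : ℕ) ∈ Set.Icc 1 n) with h | h
      · exact Nat.lt_succ_of_le (w.2.1.1.mapsTo h).2
      · simp [w.2.1.2 _ h]⟩ : Fin (n + 1)))
  intro a b hab
  apply Subtype.ext
  funext p
  by_cases hp : p ∈ Set.Icc 1 n
  · have hlt : p < n + 1 := Nat.lt_succ_of_le hp.2
    exact congrArg Fin.val (congrFun hab ⟨p, hlt⟩)
  · rw [a.2.1.2 _ hp, b.2.1.2 _ hp]

/-- The signed, colored graph `G^(k)_(c,D)` on standard `k`-ribbon words with
content vector `c` and `k`-descent set `D`, with `i`-edges the pairs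
`{w, D_i^(k)(w)}` over vertices `w` admitting an `i`-neighbor. -/
def lltGraph (k n : ℕ) (c : ℕ → ℤ) (D : Set (ℕ × ℕ)) : SCG (lltV k n c D) n n where
  sgn w := wordSgn n w.1
  edge i v u := 1 < i ∧ i < n ∧ v ≠ u ∧
    ((wordSgn n v.1 (i - 1) = -wordSgn n v.1 i ∧ u.1 = Dk k n c i v.1) ∨
     (wordSgn n u.1 (i - 1) = -wordSgn n u.1 i ∧ v.1 = Dk k n c i u.1))
  sgn_pm := by
    intro v i _ _
    simp only [wordSgn]
    split
    · exact Or.inl rfl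
    · exact Or.inr rfl
  edge_symm := by
    rintro i v u ⟨h1, h2, h3, h4⟩
    exact ⟨h1, h2, h3.symm, h4.symm⟩
  edge_ne := fun i v u h => h.2.2.1
  edge_supp := fun i v u h => ⟨h.1, h.2.1⟩

/-- The descent set of a word. -/
def DesSet (n : ℕ) (w : ℕ → ℕ) : Finset ℕ :=
  (Finset.Icc 1 (n - 1)).filter fun p => w (p + 1) < w p

/-- The (skew) Schur function of the ribbon of size `n` whose descent set is
`E`, via its quasisymmetric expansion. -/
def ribbonSchurGF (n : ℕ) (E : Finset ℕ) : MvPowerSeries ℕ ℤ :=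
  ∑ᶠ w : {w : ℕ → ℕ // IsStdWord n w ∧ DesSet n w = E}, Qfun ℤ n (wordSgn n w.1)

/-! ### Tuples of skew tableaux and LLT polynomials -/

/-- A finite set of cells forming a skew shape `λ/ν`. -/
def IsSkewShape (S : Finset (ℕ × ℕ)) : Prop :=
  ∃ lam nu : YoungDiagram, nu ≤ lam ∧ S = lam.cells \ nu.cells

/-- A semistandard filling of the cell set `S`: positive entries on `S`, zero
elsewhere, weakly increasing along rows and strictly increasing along columns. -/
def SemistdOn (S : Finset (ℕ × ℕ)) (T : ℕ × ℕ → ℕ) : Prop :=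
  (∀ x ∈ S, 1 ≤ T x) ∧ (∀ x, x ∉ S → T x = 0) ∧
  (∀ r c1 c2, (r, c1) ∈ S → (r, c2) ∈ S → c1 ≤ c2 → T (r, c1) ≤ T (r, c2)) ∧
  (∀ r1 r2 cc, (r1, cc) ∈ S → (r2, cc) ∈ S → r1 < r2 → T (r1, cc) < T (r2, cc))

/-- A `k`-tuple of semistandard tableaux of shapes `S 0, …, S (k-1)`. -/
def SemistdTuple {k : ℕ} (S : Fin k → Finset (ℕ × ℕ)) (T : Fin k → ℕ × ℕ → ℕ) : Prop :=
  ∀ i, SemistdOn (S i) (T i)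

/-- The shifted content `c̃ = k·c(x) + i` of a cell `x` of the `i`-th shape. -/
def shiftedContent (k : ℕ) (x : Fin k × ℕ × ℕ) : ℤ :=
  (k : ℤ) * cellContent x.2 + (x.1 : ℤ)

/-- `e` enumerates the cells of the tuple of shapes `S` in content reading
order (increasing shifted content, southwest to northeast on diagonals). -/
def IsCellEnum (k n : ℕ) (S : Fin k → Finset (ℕ × ℕ)) (e : ℕ → Fin k × ℕ × ℕ) : Prop :=
  Set.BijOn e (Set.Icc 1 n) {ix : Fin k × ℕ × ℕ | ix.2 ∈ S ix.1} ∧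
  ∀ p q, p ∈ Set.Icc 1 n → q ∈ Set.Icc 1 n → p < q →
    (shiftedContent k (e p) < shiftedContent k (e q) ∨
     (shiftedContent k (e p) = shiftedContent k (e q) ∧ (e p).2.2 < (e q).2.2))

/-- The content reading word of a tuple `T`, via the enumeration `e`. -/
def readWord (n : ℕ) {k : ℕ} (e : ℕ → Fin k × ℕ × ℕ) (T : Fin k → ℕ × ℕ → ℕ) : ℕ → ℕ :=
  fun p => if p ∈ Set.Icc 1 n then T (e p).1 (e p).2 else 0

/-- The weight of a tuple of tableaux, as an exponent vector (the variable
`x_j` records entries equal to `j+1`). -/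
def tupleWeight {k : ℕ} (S : Fin k → Finset (ℕ × ℕ)) (T : Fin k → ℕ × ℕ → ℕ) : ℕ →₀ ℕ :=
  ∑ i : Fin k, ∑ x ∈ S i, Finsupp.single (T i x - 1) 1

/-- The number of `k`-inversions of a tuple of tableaux. -/
def invkTuple (k : ℕ) (S : Fin k → Finset (ℕ × ℕ)) (T : Fin k → ℕ × ℕ → ℕ) : ℕ :=
  Set.ncard {p : (Fin k × ℕ × ℕ) × (Fin k × ℕ × ℕ) |
    p.1.2 ∈ S p.1.1 ∧ p.2.2 ∈ S p.2.1 ∧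
    0 < shiftedContent k p.2 - shiftedContent k p.1 ∧
    shiftedContent k p.2 - shiftedContent k p.1 < (k : ℤ) ∧
    T p.2.1 p.2.2 < T p.1.1 p.1.2}

/-- The LLT polynomial `G̃^(k)_μ(x; q) = Σ_T q^(inv_k(T)) x^T`, as a formal
power series in `x` with coefficients in `ℤ[q]`. -/
def LLTpoly (k : ℕ) (S : Fin k → Finset (ℕ × ℕ)) : MvPowerSeries ℕ (Polynomial ℤ) :=
  fun d => ∑ᶠ T : {T : Fin k → ℕ × ℕ → ℕ // SemistdTuple S T ∧ tupleWeight S T = d},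
    (Polynomial.X : Polynomial ℤ) ^ invkTuple k S T.1

/-- The weight of a word. -/
def wordWeight (n : ℕ) (w : ℕ → ℕ) : ℕ →₀ ℕ :=
  ∑ p ∈ Finset.Icc 1 n, Finsupp.single (w p - 1) 1

/-- The generating function `Σ_((w,c) ∈ WRib_k(c,D)) q^(inv_k(w,c)) x^w` of all
`k`-ribbon words with content vector `c` and `k`-descent set `D`. -/
def ribbonWordGF (k n : ℕ) (c : ℕ → ℤ) (D : Set (ℕ × ℕ)) : MvPowerSeries ℕ (Polynomial ℤ) :=
  fun d => ∑ᶠ w : {w : ℕ → ℕ // IsPosWord n w ∧ IsRibbonWord k n w c ∧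
      DesK k n w c = D ∧ wordWeight n w = d},
    (Polynomial.X : Polynomial ℤ) ^ invK k n w.1 c

/-! ### Packages, types, local Schur positivity, axiom 4' and D graphs -/

namespace SCG

variable {V W : Type} {n N : ℕ}

/-- The `i`-package of a vertex: its connected component using only the edges
of colors `≤ i-3` or `≥ i+3`. -/
def packReach (G : SCG V n N) (i : ℕ) (v w : V) : Prop :=
  G.ReachS {j | j + 3 ≤ i ∨ i + 3 ≤ j} v w

/-- `w` admits a `j`-neighbor. -/
def Admits (G : SCG V n N) (j : ℕ) (w : V) : Prop := G.sgn w (j - 1) = -G.sgn w j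

/-- `w` has `i`-type W. -/
def TypeW (G : SCG V n N) (i : ℕ) (w : V) : Prop :=
  G.Admits (i - 1) w ∧ ∃ x, G.edge (i - 1) w x ∧ G.sgn x i = -G.sgn w i

/-- `w` has `i`-type A. -/
def TypeA (G : SCG V n N) (i : ℕ) (w : V) : Prop :=
  ¬G.TypeW i w ∧ ¬G.Admits (i - 2) w

/-- `w` has `i`-type B. -/
def TypeB (G : SCG V n N) (i : ℕ) (w : V) : Prop :=
  ¬G.TypeW i w ∧ G.Admits (i - 2) w ∧ ∃ x, G.edge (i - 2) w x ∧
    ((G.Admits (i - 1) w ∧ G.sgn w (i - 1) = -G.sgn x (i - 1)) ∨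
     (¬G.Admits (i - 1) w ∧ ∃ z, G.edge (i - 1) x z ∧ G.sgn w i = -G.sgn z i))

/-- `w` has `i`-type C. -/
def TypeC (G : SCG V n N) (i : ℕ) (w : V) : Prop :=
  ¬G.TypeW i w ∧ G.Admits (i - 2) w ∧ ∃ x, G.edge (i - 2) w x ∧
    ((G.Admits (i - 1) w ∧ G.sgn w (i - 1) = G.sgn x (i - 1)) ∨
     (¬G.Admits (i - 1) w ∧ ∃ z, G.edge (i - 1) x z ∧ G.sgn w i = G.sgn z i))

/-- Twice the number of edges of colors `i-1, i` in the connected component of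
`v0` under `E_(i-1) ∪ E_i` (each edge is counted once for each orientation). -/
def twoColorEdgeCount (G : SCG V n N) (i : ℕ) (v0 : V) : ℕ :=
  Set.ncard {t : ℕ × V × V | (t.1 = i - 1 ∨ t.1 = i) ∧ G.edge t.1 t.2.1 t.2.2 ∧
    G.ReachS {i - 1, i} v0 t.2.1}

/-- Axiom 4'a: every nontrivial connected component of `E_(i-1) ∪ E_i` has
either two or four edges. -/
def Ax4a (G : SCG V n N) : Prop :=
  ∀ i, 2 < i → i < n → ∀ v0 : V,
    (∃ a b j, G.ReachS {i - 1, i} v0 a ∧ (j = i - 1 ∨ j = i) ∧ G.edge j a b) →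
    G.twoColorEdgeCount i v0 = 4 ∨ G.twoColorEdgeCount i v0 = 8

/-- Axiom 4'b. -/
def Ax4b (G : SCG V n N) : Prop :=
  ∀ i, 3 < i → i < n → ∀ w x z, G.edge (i - 2) w x → G.edge i w z →
    G.sgn w (i - 1) = -G.sgn x (i - 1) → G.sgn w (i - 2) = -G.sgn z (i - 2) →
    ∃ y, G.edge (i - 1) w y ∧ (y = x ∨ y = z)

/-- Axiom 4'c. -/
def Ax4c (G : SCG V n N) : Prop :=
  ∀ i, 3 < i → i < n → ∀ w x, G.edge (i - 2) w x → G.TypeC i w → G.TypeW (i + 1) w →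
    G.TypeC i x ∧ G.TypeW (i + 1) x

/-- The restricted degree-4 signature of a vertex. -/
def sig3 (G : SCG V n N) (i : ℕ) (v : V) : ℕ → ℤ := fun j =>
  if j = 1 then G.sgn v (i - 2) else if j = 2 then G.sgn v (i - 1) else G.sgn v i

/-- The restricted degree-5 signature of a vertex. -/
def sig4 (G : SCG V n N) (i : ℕ) (v : V) : ℕ → ℤ := fun j =>
  if j = 1 then G.sgn v (i - 3) else if j = 2 then G.sgn v (i - 2)
  else if j = 3 then G.sgn v (i - 1) else G.sgn v i

/-- Local Schur positivity: the restricted degree-4 and degree-5 generating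
functions of the two- and three-color connected components are symmetric and
Schur positive. -/
def LSP (G : SCG V n N) : Prop :=
  (∀ i, 2 < i → i < n → ∀ v0 : V,
    MvPSSymmetric (∑ᶠ v : {v : V // G.ReachS {i - 1, i} v0 v}, Qfun ℤ 4 (G.sig3 i v.1)) ∧
    SchurPositive (∑ᶠ v : {v : V // G.ReachS {i - 1, i} v0 v}, Qfun ℤ 4 (G.sig3 i v.1))) ∧
  (∀ i, 3 < i → i < n → ∀ v0 : V,
    MvPSSymmetric (∑ᶠ v : {v : V // G.ReachS {i - 2, i - 1, i} v0 v}, Qfun ℤ 5 (G.sig4 i v.1)) ∧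
    SchurPositive (∑ᶠ v : {v : V // G.ReachS {i - 2, i - 1, i} v0 v}, Qfun ℤ 5 (G.sig4 i v.1)))

/-- A D graph: a locally Schur positive signed colored graph satisfying dual
equivalence axioms 1, 2, 3 and 5 together with axiom 4'. -/
def IsDGraph (G : SCG V n N) : Prop :=
  G.LSP ∧ G.Ax1 ∧ G.Ax2 ∧ G.Ax3 ∧ G.Ax5 ∧ G.Ax4a ∧ G.Ax4b ∧ G.Ax4c

/-- The set `W_i(G)` of vertices of `i`-type W whose `(i-1)`-neighbor and
`i`-neighbor differ. -/
def Wset (G : SCG V n N) (i : ℕ) : Set V :=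
  {w | G.TypeW i w ∧ ∀ x y, G.edge (i - 1) w x → G.edge i w y → x ≠ y}

/-- The set `X_i(G)` of vertices of `i`-type C with no `(i-1)`-neighbor such
that `E_(i-2) E_i ≠ E_i E_(i-2)` at the vertex. -/
def Xset (G : SCG V n N) (i : ℕ) : Set V :=
  {x | G.TypeC i x ∧ ¬G.Admits (i - 1) x ∧
    ∀ a b, (∃ z, G.edge i x z ∧ G.edge (i - 2) z a) →
      (∃ z, G.edge (i - 2) x z ∧ G.edge i z b) → a ≠ b}

/-- `f` is an isomorphism between the `i`-packages of `w` and `u`: a bijection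
preserving the truncated signature coordinates `σ_1, …, σ_(i-3), σ_(i+2), …,
σ_(N-1)` and all edges of colors `≤ i-3` or `≥ i+3`. -/
def PackIso (G : SCG V n N) (i : ℕ) (w u : V)
    (f : {v : V // G.packReach i w v} → {v : V // G.packReach i u v}) : Prop :=
  Function.Bijective f ∧
  (∀ v j, 1 ≤ j → (j + 3 ≤ i ∨ (i + 2 ≤ j ∧ j < N)) → G.sgn (f v).1 j = G.sgn v.1 j) ∧
  ∀ j, j + 3 ≤ i ∨ i + 3 ≤ j → ∀ a b, G.edge j a.1 b.1 ↔ G.edge j (f a).1 (f b).1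

/-- One half of the new `i`-edge relation used to redefine `E_i` from a package
isomorphism `f` between the `i`-packages of `w` and `u`. -/
def newEdgePhi (G : SCG V n N) (i : ℕ) (w u : V)
    (f : {v : V // G.packReach i w v} → {v : V // G.packReach i u v}) (a b : V) : Prop :=
  (∃ ha : G.packReach i w a, b = (f ⟨a, ha⟩).1) ∨
  (∃ a' b', ∃ ha' : G.packReach i w a', G.edge i a a' ∧ b' = (f ⟨a', ha'⟩).1 ∧ G.edge i b' b) ∨
  (G.edge i a b ∧ ¬G.packReach i w a ∧ ¬G.packReach i u a ∧
    ¬G.packReach i w b ∧ ¬G.packReach i u b)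

/-- The graph obtained from `G` by replacing the edges `E_i` according to the
involution determined by the package isomorphism `f` (this is `φ_i^w(G)`,
and also `ψ_i^x(G)` when applied to the appropriate packages). -/
def phiGraph (G : SCG V n N) (i : ℕ) (hi : 1 < i) (hin : i < n) (w u : V)
    (f : {v : V // G.packReach i w v} → {v : V // G.packReach i u v}) : SCG V n N where
  sgn := G.sgn
  edge j a b :=
    if j = i then a ≠ b ∧ (G.newEdgePhi i w u f a b ∨ G.newEdgePhi i w u f b a)
    else G.edge j a b
  sgn_pm := G.sgn_pm
  edge_symm := by
    intro j a b h
    by_cases hj : j = i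
    · rw [if_pos hj] at h ⊢
      exact ⟨h.1.symm, h.2.symm⟩
    · rw [if_neg hj] at h ⊢
      exact G.edge_symm j a b h
  edge_ne := by
    intro j a b h
    by_cases hj : j = i
    · rw [if_pos hj] at h; exact h.1
    · rw [if_neg hj] at h; exact G.edge_ne j a b h
  edge_supp := by
    intro j a b h
    by_cases hj : j = i
    · subst hj; exact ⟨hi, hin⟩
    · rw [if_neg hj] at h; exact G.edge_supp j a b h

end SCG

/-! ### Fillings and Macdonald polynomials via Haglund's formula -/

/-- The weight of a filling of a Young diagram. -/
def fillingWeight (ρ : YoungDiagram) (S : ℕ × ℕ → ℕ) : ℕ →₀ ℕ :=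
  ∑ x ∈ ρ.cells, Finsupp.single (S x - 1) 1

/-- The descent set of a filling: cells not in the first row whose entry
exceeds the entry immediately below (i.e. south, in French convention). -/
def macDes (ρ : YoungDiagram) (S : ℕ × ℕ → ℕ) : Set (ℕ × ℕ) :=
  {x | x ∈ ρ.cells ∧ 1 ≤ x.1 ∧ S (x.1 - 1, x.2) < S x}

/-- The arm length of a cell. -/
def armLen (ρ : YoungDiagram) (x : ℕ × ℕ) : ℕ := Set.ncard {c' | x.2 < c' ∧ (x.1, c') ∈ ρ.cells}

/-- The leg length of a cell. -/
def legLen (ρ : YoungDiagram) (x : ℕ × ℕ) : ℕ := Set.ncard {r' | x.1 < r' ∧ (r', x.2) ∈ ρ.cells}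

/-- The major index of a filling. -/
def macMaj (ρ : YoungDiagram) (S : ℕ × ℕ → ℕ) : ℕ :=
  (macDes ρ S).ncard + ∑ᶠ x ∈ macDes ρ S, legLen ρ x

/-- The set of inversion pairs (attacking pairs in reading order with the first
entry larger). -/
def macInvSet (ρ : YoungDiagram) (S : ℕ × ℕ → ℕ) : Set ((ℕ × ℕ) × (ℕ × ℕ)) :=
  {p | p.1 ∈ ρ.cells ∧ p.2 ∈ ρ.cells ∧
    ((p.1.1 = p.2.1 ∧ p.1.2 < p.2.2) ∨ (p.1.1 = p.2.1 + 1 ∧ p.2.2 < p.1.2)) ∧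
    S p.2 < S p.1}

/-- The inversion statistic of a filling. -/
def macInv (ρ : YoungDiagram) (S : ℕ × ℕ → ℕ) : ℕ :=
  (macInvSet ρ S).ncard - ∑ᶠ x ∈ macDes ρ S, armLen ρ x

/-- The transformed Macdonald polynomial via Haglund's formula
`H̃_μ(x; q, t) = Σ_S q^(inv S) t^(maj S) x^S`, with `q = X 0` and `t = X 1`. -/
def macdonald (ρ : YoungDiagram) : MvPowerSeries ℕ (MvPolynomial (Fin 2) ℤ) :=
  fun d => ∑ᶠ S : {S : ℕ × ℕ → ℕ //
      (∀ x ∈ ρ.cells, 1 ≤ S x) ∧ (∀ x, x ∉ ρ.cells → S x = 0) ∧ fillingWeight ρ S = d},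
    (MvPolynomial.X 0 : MvPolynomial (Fin 2) ℤ) ^ macInv ρ S.1 *
      (MvPolynomial.X 1 : MvPolynomial (Fin 2) ℤ) ^ macMaj ρ S.1

/-! ### Augmented standard dual equivalence graphs -/

/-- Standard tableaux of shape `ρ` augmented by the fixed filling `A` on the
entries `n+1, …, |ρ|` (the cell of the entry `v` being `A v`). -/
def AugSYT (ρ : YoungDiagram) (n : ℕ) (A : ℕ → ℕ × ℕ) : Type :=
  {T : SYT ρ // ∀ m : Fin ρ.card, n ≤ (m : ℕ) → T.cellOf m = A ((m : ℕ) + 1)}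

instance (ρ : YoungDiagram) (n : ℕ) (A : ℕ → ℕ × ℕ) : Finite (AugSYT ρ n A) := by
  unfold AugSYT; infer_instance

/-- The augmented standard dual equivalence graph `G_(λ,A)`, a signed colored
graph of type `(n, N)` on standard tableaux of shape `ρ` (of size `N`)
restricting to `A` on `ρ/λ`, with edges the elementary dual equivalences for
`i-1, i, i+1` with `i < n`. -/
def augDEG (n N : ℕ) (ρ : YoungDiagram) (hρ : ρ.card = N) (A : ℕ → ℕ × ℕ) :
    SCG (AugSYT ρ n A) n N where
  sgn T := sytSgn T.1
  edge i T U := i < n ∧ T ≠ U ∧ (stdEdgeCore ρ i T.1 U.1 ∨ stdEdgeCore ρ i U.1 T.1)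
  sgn_pm := by
    intro v i _ _
    simp only [sytSgn]
    split
    · exact Or.inl rfl
    · exact Or.inr rfl
  edge_symm := by
    rintro i T U ⟨h1, h2, h3⟩
    exact ⟨h1, h2.symm, h3.symm⟩
  edge_ne := fun i T U h => h.2.1
  edge_supp := by
    rintro i T U ⟨h1, h2, h3 | h3⟩ <;> exact ⟨h3.1, h1⟩

end

/-!
The superstandard tableau `S_λ` (entries `1, …, n` filling the rows of `λ` in reading order) has
an ascent at every `i` that does not end a row. If all these ascents are ascents of a tableau `T`
of shape `μ`, then by induction on the entries each entry of `T` lies weakly above its row in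
`S_λ`, so the first `λ₁ + ⋯ + λ_K` entries of `T` lie in the first `K` rows: `λ ⊴ μ`. Applied to
`φ(S_λ)` and to `φ⁻¹(S_μ)` this gives `λ = μ`, and then, summing the rows, `φ(S_λ) = S_λ`.

Every vertex of `G_λ` has at most one `i`-neighbor, so the fixed points of `φ` are closed under
edges, and it remains to see that `G_λ` is connected. By induction on `n`: tableaux with `n` in
the same corner are connected inside `G_{λ ∖ corner}`, and an `(n-1)`-edge moves `n` from any
corner to the next lower one, by filling a corner read between the two with `n - 2`.
-/

open Finset

namespace SYT

variable {μ : YoungDiagram}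

theorem cell_eq (T : SYT μ) {a : ℕ} (h1 : 1 ≤ a) (h2 : a ≤ μ.card) :
    T.cell a = T.cellOf ⟨a - 1, by omega⟩ :=
  dif_pos ⟨h1, h2⟩

theorem cell_mem (T : SYT μ) {a : ℕ} (h1 : 1 ≤ a) (h2 : a ≤ μ.card) : T.cell a ∈ μ.cells := by
  rw [T.cell_eq h1 h2]
  exact T.mem_cells _

theorem ext_cell {T U : SYT μ} (h : ∀ a, 1 ≤ a → a ≤ μ.card → T.cell a = U.cell a) : T = U := by
  obtain ⟨f, _⟩ := T
  obtain ⟨g, _⟩ := U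
  congr
  funext k
  simpa [SYT.cell, show 1 ≤ k.1 + 1 ∧ k.1 + 1 ≤ μ.card by omega] using h (k + 1) (by omega) k.2

theorem image_cellOf (T : SYT μ) : univ.image T.cellOf = μ.cells :=
  eq_of_subset_of_card_le (image_subset_iff.2 fun k _ => T.mem_cells k) <| by
    rw [card_image_of_injective _ T.inj, card_univ, Fintype.card_fin]

theorem exists_cellOf_eq (T : SYT μ) {x : ℕ × ℕ} (hx : x ∈ μ.cells) : ∃ k, T.cellOf k = x := by
  rw [← T.image_cellOf] at hx
  simpa using hx

theorem le_of_cellOf_le (T : SYT μ) {k l : Fin μ.card} (h : T.cellOf k ≤ T.cellOf l) : k ≤ l := by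
  obtain ⟨e, he⟩ := T.exists_cellOf_eq (x := ((T.cellOf k).1, (T.cellOf l).2))
    (μ.isLowerSet (show _ ≤ T.cellOf l from ⟨h.1, le_rfl⟩) (T.mem_cells l))
  have hke : k ≤ e := by
    rcases h.2.lt_or_eq with h2 | h2
    · exact (T.row_mono k e (by rw [he]) (by rw [he]; exact h2)).le
    · exact (T.inj (by rw [he]; exact Prod.ext rfl h2)).le
  have hel : e ≤ l := by
    rcases h.1.lt_or_eq with h1 | h1
    · exact (T.col_mono e l (by rw [he]) (by rw [he]; exact h1)).le
    · exact (T.inj (by rw [he]; exact Prod.ext h1.symm rfl)).ge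
  exact hke.trans hel

theorem le_of_cell_le (T : SYT μ) {a b : ℕ} (ha1 : 1 ≤ a) (ha2 : a ≤ μ.card) (hb1 : 1 ≤ b)
    (hb2 : b ≤ μ.card) (h : T.cell a ≤ T.cell b) : a ≤ b := by
  rw [T.cell_eq ha1 ha2, T.cell_eq hb1 hb2] at h
  have := Fin.le_def.1 (T.le_of_cellOf_le h)
  simp only at this
  omega

theorem cell_injOn (T : SYT μ) {a b : ℕ} (ha1 : 1 ≤ a) (ha2 : a ≤ μ.card) (hb1 : 1 ≤ b)
    (hb2 : b ≤ μ.card) (h : T.cell a = T.cell b) : a = b :=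
  le_antisymm (T.le_of_cell_le ha1 ha2 hb1 hb2 h.le) (T.le_of_cell_le hb1 hb2 ha1 ha2 h.ge)

theorem image_cell_Icc (T : SYT μ) : (Icc 1 μ.card).image T.cell = μ.cells := by
  rw [← T.image_cellOf]
  ext x
  simp only [mem_image, mem_Icc, mem_univ, true_and]
  constructor
  · rintro ⟨a, ⟨h1, h2⟩, rfl⟩
    exact ⟨_, (T.cell_eq h1 h2).symm⟩
  · rintro ⟨k, rfl⟩
    exact ⟨k + 1, ⟨by omega, k.2⟩, by rw [T.cell_eq (by omega) k.2]; rfl⟩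

theorem exists_cell_eq (T : SYT μ) {x : ℕ × ℕ} (hx : x ∈ μ.cells) :
    ∃ a, 1 ≤ a ∧ a ≤ μ.card ∧ T.cell a = x := by
  rw [← T.image_cell_Icc] at hx
  simpa [and_assoc] using hx

theorem maximal_cell_card (T : SYT μ) (hpos : 0 < μ.card) :
    Maximal (· ∈ μ.cells) (T.cell μ.card) := by
  refine ⟨T.cell_mem hpos le_rfl, fun y hy hle => ?_⟩
  obtain ⟨b, hb1, hb2, rfl⟩ := T.exists_cell_eq hy
  rw [show b = μ.card from le_antisymm hb2 (T.le_of_cell_le hpos le_rfl hb1 hb2 hle)]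

def ofCellOf (f : Fin μ.card → ℕ × ℕ) (hmem : ∀ k, f k ∈ μ.cells)
    (hmono : ∀ k l, f k ≤ f l → k ≤ l) : SYT μ where
  cellOf := f
  mem_cells := hmem
  inj k l h := le_antisymm (hmono k l h.le) (hmono l k h.ge)
  row_mono k l hr hc := lt_of_le_of_ne (hmono k l ⟨hr.le, hc.le⟩) (by rintro rfl; omega)
  col_mono k l hc hr := lt_of_le_of_ne (hmono k l ⟨hr.le, hc.le⟩) (by rintro rfl; omega)

def lexEnum (μ : YoungDiagram) : Fin μ.card ↪o ℕ ×ₗ ℕ :=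
  (μ.cells.map toLex.toEmbedding).orderEmbOfFin (by simp)

def superstandard (μ : YoungDiagram) : SYT μ :=
  ofCellOf (fun k => ofLex (lexEnum μ k))
    (fun k => by
      simpa [lexEnum] using (μ.cells.map toLex.toEmbedding).orderEmbOfFin_mem (by simp) k)
    (fun k l h => (lexEnum μ).le_iff_le.1 (Prod.Lex.toLex_mono h))

theorem superstandard_row_mono {a b : ℕ} (ha1 : 1 ≤ a) (hab : a ≤ b) (hb2 : b ≤ μ.card) :
    ((superstandard μ).cell a).1 ≤ ((superstandard μ).cell b).1 := by
  rw [cell_eq _ ha1 (by omega), cell_eq _ (by omega) hb2]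
  have := (lexEnum μ).monotone
    (show (⟨a - 1, by omega⟩ : Fin μ.card) ≤ ⟨b - 1, by omega⟩ from Fin.mk_le_mk.2 (by omega))
  exact (Prod.Lex.toLex_le_toLex'.1 this).1

theorem sytSgn_eq_one_of_fst_eq (T : SYT μ) {i : ℕ} (h1 : 1 ≤ i) (h2 : i < μ.card)
    (h : (T.cell i).1 = (T.cell (i + 1)).1) : sytSgn T i = 1 := by
  have hcol : (T.cell i).2 < (T.cell (i + 1)).2 := by
    by_contra hle
    have := T.le_of_cell_le (by omega) h2 h1 h2.le ⟨h.ge, not_lt.1 hle⟩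
    omega
  rw [sytSgn, if_pos (show readBefore _ _ from Or.inl (by unfold cellContent; omega))]

theorem snd_lt_of_sytSgn_eq_one (T : SYT μ) {i : ℕ} (h1 : 1 ≤ i) (h2 : i < μ.card)
    (h : sytSgn T i = 1) : (T.cell i).2 < (T.cell (i + 1)).2 := by
  have hrb : readBefore (T.cell i) (T.cell (i + 1)) := by
    by_contra hrb
    simp [sytSgn, hrb] at h
  by_contra hle
  have hrow : (T.cell (i + 1)).1 ≤ (T.cell i).1 := by
    rcases hrb with hc | ⟨_, hc⟩ <;> unfold cellContent at * <;> omega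
  have := T.le_of_cell_le (by omega) h2 h1 h2.le ⟨hrow, not_lt.1 hle⟩
  omega

theorem snd_lt_snd_of_ascents (T : SYT μ) {e a : ℕ} (he : 1 ≤ e) (hea : e < a) (ha : a ≤ μ.card)
    (hasc : ∀ i, e ≤ i → i < a → sytSgn T i = 1) : (T.cell e).2 < (T.cell a).2 := by
  induction a, hea using Nat.le_induction with
  | base => exact T.snd_lt_of_sytSgn_eq_one he ha (hasc e le_rfl (by omega))
  | succ a hea ih =>
    exact (ih (by omega) fun i h1 h2 => hasc i h1 (by omega)).trans
      (T.snd_lt_of_sytSgn_eq_one (by omega) ha (hasc a (by omega) (by omega)))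

theorem fst_le_superstandard {ν : YoungDiagram} (T : SYT μ) (hcard : ν.card = μ.card)
    (hasc : ∀ i, 1 ≤ i → i < ν.card → sytSgn (superstandard ν) i = 1 → sytSgn T i = 1)
    {a : ℕ} (ha1 : 1 ≤ a) (ha2 : a ≤ ν.card) : (T.cell a).1 ≤ ((superstandard ν).cell a).1 := by
  induction a using Nat.strong_induction_on with
  | _ a ih =>
  set S := superstandard ν
  obtain ⟨⟨r, t⟩, hx⟩ : ∃ x, T.cell a = x := ⟨_, rfl⟩
  rw [hx]
  rcases r with _ | r
  · exact Nat.zero_le _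
  -- The entry `e` just above `a` is smaller, and lies in an earlier row of `S`: otherwise all of
  -- `e, …, a - 1` would be ascents of `S`, hence of `T`, and `e`, `a` could not share a column.
  obtain ⟨e, he1, he2, he⟩ := T.exists_cell_eq (x := (r, t))
    (μ.isLowerSet (show (r, t) ≤ (r + 1, t) from ⟨by simp, le_rfl⟩)
      (hx ▸ T.cell_mem ha1 (by omega)))
  have hea : e < a := lt_of_le_of_ne
    (T.le_of_cell_le he1 he2 ha1 (by omega) (by rw [he, hx]; exact ⟨by simp, le_rfl⟩))
    (by rintro rfl; rw [hx] at he; simp at he)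
  have hSrow : (S.cell e).1 < (S.cell a).1 := by
    refine lt_of_le_of_ne (superstandard_row_mono he1 hea.le ha2) fun hrow => ?_
    have hcol := T.snd_lt_snd_of_ascents he1 hea (by omega) fun i h1 h2 =>
      hasc i (by omega) (by omega) <| S.sytSgn_eq_one_of_fst_eq (by omega) (by omega) <|
        le_antisymm (superstandard_row_mono (by omega) (by omega) (by omega))
          ((superstandard_row_mono (by omega) (by omega) ha2).trans
            (hrow.symm.le.trans (superstandard_row_mono he1 h1 (by omega))))
    rw [he, hx] at hcol
    exact lt_irrefl _ hcol
  have := ih e hea he1 (by omega)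
  rw [he] at this
  simp only at this ⊢
  omega

theorem card_filter_fst_lt_le {ν : YoungDiagram} (S : SYT ν) (T : SYT μ) (hcard : ν.card = μ.card)
    (hrow : ∀ a, 1 ≤ a → a ≤ ν.card → (T.cell a).1 ≤ (S.cell a).1) (K : ℕ) :
    #{x ∈ ν.cells | x.1 < K} ≤ #{x ∈ μ.cells | x.1 < K} := by
  set A := {a ∈ Icc 1 ν.card | (S.cell a).1 < K}
  calc #{x ∈ ν.cells | x.1 < K} = #(A.image S.cell) := by rw [← S.image_cell_Icc, filter_image]
    _ = #A := card_image_of_injOn fun a ha b hb h => by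
        simp only [A, coe_filter, mem_Icc, Set.mem_ofPred_eq] at ha hb
        exact S.cell_injOn ha.1.1 ha.1.2 hb.1.1 hb.1.2 h
    _ ≤ #{x ∈ μ.cells | x.1 < K} := by
        refine card_le_card_of_injOn T.cell (fun a ha => ?_) fun a ha b hb h => ?_
        · simp only [A, coe_filter, mem_Icc, Set.mem_ofPred_eq] at ha
          simp only [coe_filter, Set.mem_ofPred_eq]
          exact ⟨T.cell_mem ha.1.1 (by omega), (hrow a ha.1.1 ha.1.2).trans_lt ha.2⟩
        · simp only [A, coe_filter, mem_Icc, Set.mem_ofPred_eq] at ha hb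
          exact T.cell_injOn ha.1.1 (by omega) hb.1.1 (by omega) h

theorem card_filter_fst_lt_le_of_ascents {ν : YoungDiagram} (T : SYT μ) (hcard : ν.card = μ.card)
    (hasc : ∀ i, 1 ≤ i → i < ν.card → sytSgn (superstandard ν) i = 1 → sytSgn T i = 1) (K : ℕ) :
    #{x ∈ ν.cells | x.1 < K} ≤ #{x ∈ μ.cells | x.1 < K} :=
  card_filter_fst_lt_le _ T hcard (fun _ h1 h2 => T.fst_le_superstandard hcard hasc h1 h2) K

theorem sum_fst_cell (T : SYT μ) : ∑ a ∈ Icc 1 μ.card, (T.cell a).1 = ∑ x ∈ μ.cells, x.1 := by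
  rw [← T.image_cell_Icc, sum_image fun a ha b hb h => by
    simp only [coe_Icc, Set.mem_Icc] at ha hb
    exact T.cell_injOn ha.1 ha.2 hb.1 hb.2 h]

/-- `a` occupies the leftmost cell of its row that the entries below `a` leave free. -/
theorem snd_le_of_fst_eq {S T : SYT μ} {a : ℕ} (ha1 : 1 ≤ a) (ha2 : a ≤ μ.card)
    (hrow : (T.cell a).1 = (S.cell a).1) (hlt : ∀ b, 1 ≤ b → b < a → T.cell b = S.cell b) :
    (T.cell a).2 ≤ (S.cell a).2 := by
  by_contra hcol
  obtain ⟨e, he1, he2, he⟩ := T.exists_cell_eq (x := ((T.cell a).1, (S.cell a).2))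
    (μ.isLowerSet (show _ ≤ T.cell a from ⟨le_rfl, by simp only; omega⟩) (T.cell_mem ha1 ha2))
  have hea : e < a := lt_of_le_of_ne (T.le_of_cell_le he1 he2 ha1 ha2 (by rw [he]; exact
    ⟨le_rfl, by simp only; omega⟩)) (by rintro rfl; exact hcol (congrArg Prod.snd he).le)
  have := S.cell_injOn he1 he2 ha1 ha2 (by rw [← hlt e he1 hea, he, hrow])
  omega

theorem eq_of_fst_eq {S T : SYT μ}
    (hrow : ∀ a, 1 ≤ a → a ≤ μ.card → (T.cell a).1 = (S.cell a).1) : T = S := by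
  refine ext_cell fun a => ?_
  induction a using Nat.strong_induction_on with
  | _ a ih =>
  intro ha1 ha2
  have hlt : ∀ b, 1 ≤ b → b < a → T.cell b = S.cell b := fun b h1 h2 => ih b h2 h1 (by omega)
  exact Prod.ext (hrow a ha1 ha2) (le_antisymm (snd_le_of_fst_eq ha1 ha2 (hrow a ha1 ha2) hlt)
    (snd_le_of_fst_eq ha1 ha2 (hrow a ha1 ha2).symm fun b h1 h2 => (hlt b h1 h2).symm))

theorem eq_superstandard (T : SYT μ)
    (hasc : ∀ i, 1 ≤ i → i < μ.card → sytSgn (superstandard μ) i = 1 → sytSgn T i = 1) :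
    T = superstandard μ := by
  have hle := fun a (h1 : 1 ≤ a) (h2 : a ≤ μ.card) => T.fst_le_superstandard rfl hasc h1 h2
  have hsum := (sum_eq_sum_iff_of_le fun a ha => hle a (mem_Icc.1 ha).1 (mem_Icc.1 ha).2).1
    (by rw [sum_fst_cell, sum_fst_cell])
  exact eq_of_fst_eq fun a h1 h2 => hsum a (mem_Icc.2 ⟨h1, h2⟩)

end SYT

theorem Finset.maximal_mem_erase {α : Type*} [LE α] [DecidableEq α] {s : Finset α} {x y : α}
    (hx : Maximal (· ∈ s) x) (hxy : x ≠ y) : Maximal (· ∈ s.erase y) x :=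
  hx.mono (fun _ => mem_of_mem_erase) (mem_erase.2 ⟨hxy, hx.1⟩)

namespace YoungDiagram

variable {μ : YoungDiagram}

theorem card_filter_fst_lt_succ (ν : YoungDiagram) (j : ℕ) :
    #{x ∈ ν.cells | x.1 < j + 1} = #{x ∈ ν.cells | x.1 < j} + ν.rowLen j := by
  rw [rowLen_eq_card, row, ← card_union_of_disjoint
    (disjoint_filter.2 fun x _ h1 h2 => by omega), ← filter_or]
  congr 1
  ext x
  simp only [mem_filter]
  constructor <;> rintro ⟨hx, h⟩ <;> exact ⟨hx, by omega⟩

theorem eq_of_card_filter_fst_lt_eq {ν : YoungDiagram}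
    (h : ∀ K, #{x ∈ ν.cells | x.1 < K} = #{x ∈ μ.cells | x.1 < K}) : ν = μ := by
  have hrow (j : ℕ) : ν.rowLen j = μ.rowLen j := by
    have := h (j + 1)
    rw [card_filter_fst_lt_succ, card_filter_fst_lt_succ, h j] at this
    omega
  ext ⟨i, j⟩
  simp only [mem_cells, mem_iff_lt_rowLen, hrow]

theorem maximal_mem_cells_iff {x : ℕ × ℕ} :
    Maximal (· ∈ μ.cells) x ↔
      x ∈ μ.cells ∧ (x.1 + 1, x.2) ∉ μ.cells ∧ (x.1, x.2 + 1) ∉ μ.cells := by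
  refine ⟨fun hx => ⟨hx.1, fun h => ?_, fun h => ?_⟩, fun ⟨hx, hdown, hright⟩ => ⟨hx, ?_⟩⟩
  · exact absurd (hx.2 h ⟨Nat.le_succ _, le_rfl⟩).1 (by simp)
  · exact absurd (hx.2 h ⟨le_rfl, Nat.le_succ _⟩).2 (by simp)
  · intro y hy hxy
    by_contra hyx
    rcases Nat.lt_or_ge x.1 y.1 with h | h
    · exact hdown (μ.isLowerSet (show (x.1 + 1, x.2) ≤ y from ⟨h, hxy.2⟩) hy)
    · exact hright (μ.isLowerSet (show (x.1, x.2 + 1) ≤ y from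
        ⟨hxy.1, Nat.lt_of_not_le fun h' => hyx ⟨h, h'⟩⟩) hy)

theorem maximal_mem_cells_iff_rowLen {j t : ℕ} :
    Maximal (· ∈ μ.cells) (j, t) ↔ t + 1 = μ.rowLen j ∧ μ.rowLen (j + 1) ≤ t := by
  rw [maximal_mem_cells_iff]
  simp only [mem_cells, mem_iff_lt_rowLen]
  have := μ.rowLen_anti j (j + 1) (by omega)
  omega

theorem eq_of_maximal_of_notMem_below {x y : ℕ × ℕ} (hx : Maximal (· ∈ μ.cells) x)
    (hy : Maximal (· ∈ μ.cells) y) (hx' : (x.1 + 1, 0) ∉ μ.cells)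
    (hy' : (y.1 + 1, 0) ∉ μ.cells) : x = y := by
  have hrow : x.1 = y.1 := by
    by_contra hne
    rcases Nat.lt_or_gt_of_ne hne with h | h
    · exact hx' (μ.isLowerSet (show (x.1 + 1, 0) ≤ y from ⟨h, Nat.zero_le _⟩) hy.1)
    · exact hy' (μ.isLowerSet (show (y.1 + 1, 0) ≤ x from ⟨h, Nat.zero_le _⟩) hx.1)
  obtain ⟨j, t⟩ := x
  obtain ⟨j', t'⟩ := y
  simp only at hrow
  subst hrow
  have := (maximal_mem_cells_iff_rowLen.1 hx).1
  have := (maximal_mem_cells_iff_rowLen.1 hy).1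
  rw [show t = t' by omega]

theorem exists_last_row_of_rowLen {j : ℕ} (hj : 0 < μ.rowLen j) :
    ∃ k, j ≤ k ∧ μ.rowLen k = μ.rowLen j ∧ μ.rowLen (k + 1) < μ.rowLen k := by
  by_contra! h
  have hall (m : ℕ) : μ.rowLen (j + m) = μ.rowLen j := by
    induction m with
    | zero => rfl
    | succ m ih => exact le_antisymm (μ.rowLen_anti _ _ (by omega)) (ih ▸ h _ (by omega) ih)
  have hempty : (j + μ.colLen 0, 0) ∉ μ := by
    rw [mem_iff_lt_colLen]
    omega
  rw [mem_iff_lt_rowLen, hall] at hempty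
  exact hempty hj

theorem exists_maximal_below {r : ℕ} (hbelow : (r + 1, 0) ∈ μ.cells) :
    ∃ c'' : ℕ × ℕ, Maximal (· ∈ μ.cells) c'' ∧ r < c''.1 ∧
      ∀ j, r < j → j ≤ c''.1 → μ.rowLen j = c''.2 + 1 := by
  rw [mem_cells, mem_iff_lt_rowLen] at hbelow
  obtain ⟨k, hk, hlen, hlt⟩ := exists_last_row_of_rowLen hbelow
  refine ⟨(k, μ.rowLen k - 1), maximal_mem_cells_iff_rowLen.2 ⟨by omega, by omega⟩,
    by simpa using hk, fun j h1 h2 => ?_⟩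
  have := μ.rowLen_anti (r + 1) j (by omega)
  have := μ.rowLen_anti j k h2
  simp only at h2 ⊢
  omega

def eraseMaximal (μ : YoungDiagram) {c : ℕ × ℕ} (hc : Maximal (· ∈ μ.cells) c) :
    YoungDiagram where
  cells := μ.cells.erase c
  isLowerSet := by
    rw [coe_erase]
    exact μ.isLowerSet.erase fun b hb hcb => hc.eq_of_ge hb hcb

theorem cells_eraseMaximal (μ : YoungDiagram) {c : ℕ × ℕ} (hc : Maximal (· ∈ μ.cells) c) :
    (μ.eraseMaximal hc).cells = μ.cells.erase c :=
  rfl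

theorem card_of_cells_eq_erase {ν : YoungDiagram} {c : ℕ × ℕ} (hc : c ∈ μ.cells)
    (hcells : ν.cells = μ.cells.erase c) : ν.card + 1 = μ.card := by
  rw [YoungDiagram.card, hcells, card_erase_add_one hc]

theorem exists_maximal_between {c c'' : ℕ × ℕ} (hc : Maximal (· ∈ μ.cells) c)
    (hc'' : Maximal (· ∈ μ.cells) c'') (hr : c.1 < c''.1)
    (hrows : ∀ j, c.1 < j → j ≤ c''.1 → μ.rowLen j = c''.2 + 1) :
    ∃ d, Maximal (· ∈ (μ.cells.erase c).erase c'') d ∧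
      cellContent c'' < cellContent d ∧ cellContent d < cellContent c := by
  obtain ⟨r, s⟩ := c
  obtain ⟨r'', s''⟩ := c''
  simp only at hr hrows
  let ν := (μ.eraseMaximal hc).eraseMaximal
    (Finset.maximal_mem_erase hc'' (by simp only [ne_eq, Prod.mk.injEq]; omega))
  have hmem (x : ℕ × ℕ) : x ∈ ν.cells ↔ x ≠ (r'', s'') ∧ x ≠ (r, s) ∧ x.2 < μ.rowLen x.1 := by
    show x ∈ (μ.cells.erase _).erase _ ↔ _
    rw [mem_erase, mem_erase, mem_cells, ← mem_iff_lt_rowLen]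
  obtain ⟨hrow, hrow'⟩ := maximal_mem_cells_iff_rowLen.1 hc
  have hs : s'' < s := by
    have := hrows (r + 1) (by omega) (by omega)
    omega
  obtain ⟨-, hrow''⟩ := maximal_mem_cells_iff_rowLen.1 hc''
  rcases Nat.lt_or_ge (s'' + 1) s with hgap | hgap
  · have := hrows (r + 1) (by omega) (by omega)
    refine ⟨(r, s - 1), (maximal_mem_cells_iff (μ := ν)).2 ⟨?_, ?_, ?_⟩, ?_, ?_⟩ <;>
      simp only [hmem, cellContent, ne_eq, Prod.mk.injEq, true_and] <;> omega
  · have hprev : (r'' - 1 = r ∧ μ.rowLen (r'' - 1) = s + 1) ∨ μ.rowLen (r'' - 1) = s'' + 1 := by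
      rcases Nat.lt_or_ge r (r'' - 1) with h | h
      · exact .inr (hrows _ h (by omega))
      · exact .inl ⟨by omega, by rw [show r'' - 1 = r by omega, hrow]⟩
    refine ⟨(r'' - 1, s''), (maximal_mem_cells_iff (μ := ν)).2 ⟨?_, ?_, ?_⟩, ?_, ?_⟩ <;>
      simp only [hmem, cellContent, ne_eq, Prod.mk.injEq, and_true] <;> omega

end YoungDiagram

theorem readBefore_trans {x y z : ℕ × ℕ} (hxy : readBefore x y) (hyz : readBefore y z) :
    readBefore x z := by
  unfold readBefore at *
  omega

theorem readBefore_asymm {x y : ℕ × ℕ} (hxy : readBefore x y) : ¬readBefore y x := by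
  unfold readBefore at *
  omega

section Edges

variable {μ : YoungDiagram}

theorem posBetween_comm {T : SYT μ} {a b c : ℕ} : posBetween T a b c ↔ posBetween T c b a := by
  unfold posBetween
  tauto

theorem not_posBetween_and_posBetween {T : SYT μ} {i : ℕ} :
    ¬(posBetween T i (i + 1) (i - 1) ∧ posBetween T i (i - 1) (i + 1)) := by
  rintro ⟨⟨h1, h2⟩ | ⟨h1, h2⟩, ⟨h3, h4⟩ | ⟨h3, h4⟩⟩
  · exact readBefore_asymm h2 h4
  · exact readBefore_asymm h1 (readBefore_trans h3 h4)
  · exact readBefore_asymm h2 (readBefore_trans h3 h4)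
  · exact readBefore_asymm h1 h3

theorem swapEq_symm {T U : SYT μ} {a b : ℕ} (ha1 : 1 ≤ a) (ha2 : a ≤ μ.card)
    (hb1 : 1 ≤ b) (hb2 : b ≤ μ.card) (h : swapEq T U a b) : swapEq U T a b := by
  intro x hx1 hx2
  rw [h a ha1 ha2, h b hb1 hb2, h x hx1 hx2]
  split_ifs <;> simp_all

theorem stdEdgeCore_symm {T U : SYT μ} {i : ℕ} (h : stdEdgeCore μ i T U) :
    stdEdgeCore μ i U T := by
  obtain ⟨hi1, hi2, ⟨hpos, hswap⟩ | ⟨hpos, hswap⟩⟩ := h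
  · refine ⟨hi1, hi2, .inl ⟨?_, swapEq_symm (by omega) (by omega) (by omega) (by omega) hswap⟩⟩
    rw [posBetween_comm] at hpos
    unfold posBetween at hpos ⊢
    rw [hswap (i - 1) (by omega) (by omega), hswap i (by omega) (by omega),
      hswap (i + 1) (by omega) (by omega)]
    simpa [show i ≠ i - 1 by omega, show i + 1 ≠ i - 1 by omega, show i + 1 ≠ i by omega]
      using hpos
  · refine ⟨hi1, hi2, .inr ⟨?_, swapEq_symm (by omega) (by omega) (by omega) (by omega) hswap⟩⟩
    rw [posBetween_comm] at hpos
    unfold posBetween at hpos ⊢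
    rw [hswap (i - 1) (by omega) (by omega), hswap i (by omega) (by omega),
      hswap (i + 1) (by omega) (by omega)]
    simpa [show i - 1 ≠ i by omega, show i - 1 ≠ i + 1 by omega, show i ≠ i + 1 by omega]
      using hpos

theorem stdEdgeCore_unique {T U U' : SYT μ} {i : ℕ} (h : stdEdgeCore μ i T U)
    (h' : stdEdgeCore μ i T U') : U = U' := by
  obtain ⟨-, -, ⟨hpos, hswap⟩ | ⟨hpos, hswap⟩⟩ := h <;>
    obtain ⟨-, -, ⟨hpos', hswap'⟩ | ⟨hpos', hswap'⟩⟩ := h'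
  · exact SYT.ext_cell fun x hx1 hx2 => by rw [hswap x hx1 hx2, hswap' x hx1 hx2]
  · exact absurd ⟨hpos, hpos'⟩ not_posBetween_and_posBetween
  · exact absurd ⟨hpos', hpos⟩ not_posBetween_and_posBetween
  · exact SYT.ext_cell fun x hx1 hx2 => by rw [hswap x hx1 hx2, hswap' x hx1 hx2]

theorem stdDEG_edge_unique {n : ℕ} (h : μ.card = n) {i : ℕ} {T U U' : SYT μ}
    (hU : (stdDEG n μ h).edge i T U) (hU' : (stdDEG n μ h).edge i T U') : U = U' :=
  stdEdgeCore_unique (hU.2.elim id stdEdgeCore_symm) (hU'.2.elim id stdEdgeCore_symm)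

end Edges

section Reach

variable {V : Type} {n N : ℕ} {G : SCG V n N}

theorem SCG.Reach.symm {v w : V} (h : G.Reach v w) : G.Reach w v := by
  induction h with
  | refl => exact .refl
  | tail _ hbc ih =>
    obtain ⟨i, hbc⟩ := hbc
    exact .head ⟨i, G.edge_symm _ _ _ hbc⟩ ih

theorem SCG.map_eq_self_of_reach {φ : V → V} (hφ : ∀ i v w, G.edge i v w → G.edge i (φ v) (φ w))
    (huniq : ∀ i v w w', G.edge i v w → G.edge i v w' → w = w') {v w : V} (hvw : G.Reach v w)
    (hv : φ v = v) : φ w = w := by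
  induction hvw with
  | refl => exact hv
  | tail _ hbc ih =>
    obtain ⟨i, hbc⟩ := hbc
    have := hφ i _ _ hbc
    rw [ih] at this
    exact (huniq i _ _ _ hbc this).symm

end Reach

namespace SYT

variable {κ ν μ : YoungDiagram}

open YoungDiagram

def extend (T : SYT ν) (c : ℕ × ℕ) (hc : Maximal (· ∈ μ.cells) c)
    (hcells : ν.cells = μ.cells.erase c) : SYT μ :=
  have hcard := card_of_cells_eq_erase hc.1 hcells
  ofCellOf (fun k => if h : (k : ℕ) < ν.card then T.cellOf ⟨k, h⟩ else c)
    (fun k => by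
      split
      · exact mem_of_mem_erase (hcells ▸ T.mem_cells _)
      · exact hc.1)
    (fun k l hkl => by
      rw [Fin.le_def]
      split at hkl <;> split at hkl
      · exact Fin.le_def.1 (T.le_of_cellOf_le hkl)
      · omega
      · have hmem := hcells ▸ T.mem_cells ⟨l, by assumption⟩
        exact absurd (hc.eq_of_ge (mem_of_mem_erase hmem) hkl) (mem_erase.1 hmem).1
      · omega)

section Extend

variable (T : SYT ν) (c : ℕ × ℕ) (hc : Maximal (· ∈ μ.cells) c)
  (hcells : ν.cells = μ.cells.erase c)

theorem extend_cell_of_le {a : ℕ} (h1 : 1 ≤ a) (h2 : a ≤ ν.card) :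
    (T.extend c hc hcells).cell a = T.cell a := by
  have hcard := card_of_cells_eq_erase hc.1 hcells
  rw [cell_eq _ h1 (by omega), cell_eq _ h1 h2]
  exact dif_pos (by simp only; omega)

theorem extend_cell_card : (T.extend c hc hcells).cell μ.card = c := by
  have hcard := card_of_cells_eq_erase hc.1 hcells
  rw [cell_eq _ (by omega) le_rfl]
  exact dif_neg (by simp only; omega)

theorem cell_extend {a : ℕ} (h1 : 1 ≤ a) (h2 : a ≤ μ.card) :
    (T.extend c hc hcells).cell a = if a = μ.card then c else T.cell a := by
  have hcard := card_of_cells_eq_erase hc.1 hcells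
  split_ifs with ha
  · rw [ha, extend_cell_card]
  · exact extend_cell_of_le T c hc hcells h1 (by omega)

end Extend

theorem cell_extend_extend (T : SYT κ) {c' c : ℕ × ℕ} (hc' : Maximal (· ∈ ν.cells) c')
    (hc : Maximal (· ∈ μ.cells) c) (hcells' : κ.cells = ν.cells.erase c')
    (hcells : ν.cells = μ.cells.erase c) {a : ℕ} (h1 : 1 ≤ a) (h2 : a ≤ μ.card) :
    ((T.extend c' hc' hcells').extend c hc hcells).cell a =
      if a = μ.card then c else if a = μ.card - 1 then c' else T.cell a := by
  have hcard := card_of_cells_eq_erase hc.1 hcells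
  rw [cell_extend _ _ _ _ h1 h2]
  by_cases ha : a = μ.card
  · rw [if_pos ha, if_pos ha]
  · rw [if_neg ha, if_neg ha, cell_extend _ _ _ _ h1 (by omega), show ν.card = μ.card - 1 by omega]

theorem extend_injective (c : ℕ × ℕ) (hc : Maximal (· ∈ μ.cells) c)
    (hcells : ν.cells = μ.cells.erase c) :
    Function.Injective fun T : SYT ν => T.extend c hc hcells := fun T U h =>
  ext_cell fun a h1 h2 => by
    simpa only [extend_cell_of_le _ c hc hcells h1 h2] using congrArg (cell · a) h

theorem exists_eq_extend (T : SYT μ) (c : ℕ × ℕ) (hc : Maximal (· ∈ μ.cells) c)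
    (hcells : ν.cells = μ.cells.erase c) (hTc : T.cell μ.card = c) :
    ∃ T₀ : SYT ν, T = T₀.extend c hc hcells := by
  have hcard := card_of_cells_eq_erase hc.1 hcells
  have hTc' : T.cellOf ⟨ν.card, by omega⟩ = c := by
    rw [← hTc, cell_eq _ (by omega) le_rfl]
    congr 2
    omega
  refine ⟨ofCellOf (fun k => T.cellOf ⟨k, by omega⟩) (fun k => ?_) fun k l hkl => ?_, ?_⟩
  · rw [hcells, mem_erase, ← hTc']
    refine ⟨fun h => ?_, T.mem_cells _⟩
    have := congrArg Fin.val (T.inj h)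
    simp only at this
    omega
  · exact Fin.le_def.2 (Fin.le_def.1 (T.le_of_cellOf_le hkl))
  · refine ext_cell fun a h1 h2 => ?_
    rcases Nat.lt_or_ge a μ.card with ha | ha
    · rw [extend_cell_of_le _ c hc hcells h1 (by omega), cell_eq _ h1 h2, cell_eq _ h1 (by omega)]
      rfl
    · rw [show a = μ.card by omega, extend_cell_card, hTc]

theorem exists_cell_card_eq {c : ℕ × ℕ} (hc : Maximal (· ∈ μ.cells) c) :
    ∃ T : SYT μ, T.cell μ.card = c :=
  ⟨(superstandard _).extend c hc (μ.cells_eraseMaximal hc), extend_cell_card _ _ _ _⟩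

theorem stdEdgeCore_extend (c : ℕ × ℕ) (hc : Maximal (· ∈ μ.cells) c)
    (hcells : ν.cells = μ.cells.erase c) {T U : SYT ν} {i : ℕ} (h : stdEdgeCore ν i T U) :
    stdEdgeCore μ i (T.extend c hc hcells) (U.extend c hc hcells) := by
  have hcard := card_of_cells_eq_erase hc.1 hcells
  obtain ⟨hi1, hi2, hcase⟩ := h
  have hswap {a b : ℕ} (ha1 : 1 ≤ a) (ha : a ≤ ν.card) (hb1 : 1 ≤ b) (hb : b ≤ ν.card)
      (h : swapEq T U a b) : swapEq (T.extend c hc hcells) (U.extend c hc hcells) a b :=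
    fun x hx1 hx2 => by
    by_cases hx : x ≤ ν.card
    · rw [cell_extend _ c hc hcells hx1 hx2, if_neg (by omega), h x hx1 hx]
      split_ifs <;> rw [cell_extend _ c hc hcells (by omega) (by omega), if_neg (by omega)]
    · obtain rfl : x = μ.card := by omega
      rw [if_neg (by omega), if_neg (by omega), extend_cell_card, extend_cell_card]
  refine ⟨hi1, by omega, ?_⟩
  unfold posBetween
  rw [extend_cell_of_le _ c hc hcells (a := i - 1) (by omega) (by omega),
    extend_cell_of_le _ c hc hcells (a := i) (by omega) (by omega),
    extend_cell_of_le _ c hc hcells (a := i + 1) (by omega) (by omega)]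
  exact hcase.imp (And.imp id (hswap (by omega) (by omega) (by omega) (by omega)))
    (And.imp id (hswap (by omega) (by omega) (by omega) (by omega)))

theorem reach_extend (c : ℕ × ℕ) (hc : Maximal (· ∈ μ.cells) c)
    (hcells : ν.cells = μ.cells.erase c) {T U : SYT ν} (h : (stdDEG ν.card ν rfl).Reach T U) :
    (stdDEG μ.card μ rfl).Reach (T.extend c hc hcells) (U.extend c hc hcells) := by
  unfold SCG.Reach at h ⊢
  exact Relation.ReflTransGen.lift (p := fun T U => ∃ i, (stdDEG μ.card μ rfl).edge i T U)
    (fun T => T.extend c hc hcells) (fun _ _ ⟨i, hne, hcore⟩ =>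
      ⟨i, (extend_injective c hc hcells).ne hne,
        hcore.imp (stdEdgeCore_extend c hc hcells) (stdEdgeCore_extend c hc hcells)⟩) _ _ h

theorem reach_of_cell_card_eq (hpos : 0 < μ.card)
    (ih : ∀ ν : YoungDiagram, ν.card < μ.card → ∀ T U : SYT ν, (stdDEG ν.card ν rfl).Reach T U)
    {T U : SYT μ} (h : T.cell μ.card = U.cell μ.card) : (stdDEG μ.card μ rfl).Reach T U := by
  obtain ⟨c, hTc⟩ : ∃ c, T.cell μ.card = c := ⟨_, rfl⟩
  have hc : Maximal (· ∈ μ.cells) c := hTc ▸ T.maximal_cell_card hpos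
  have hcells := μ.cells_eraseMaximal hc
  obtain ⟨T₀, rfl⟩ := T.exists_eq_extend c hc hcells hTc
  obtain ⟨U₀, rfl⟩ := U.exists_eq_extend c hc hcells (h ▸ hTc)
  have := card_of_cells_eq_erase hc.1 hcells
  exact reach_extend c hc hcells (ih _ (by omega) T₀ U₀)

theorem exists_swapEq_of_maximal {c c'' d : ℕ × ℕ} (hc : Maximal (· ∈ μ.cells) c)
    (hc'' : Maximal (· ∈ μ.cells) c'') (hne : c'' ≠ c)
    (hd : Maximal (· ∈ (μ.cells.erase c).erase c'') d) :
    ∃ W W' : SYT μ, 2 < μ.card ∧ W.cell μ.card = c ∧ W.cell (μ.card - 1) = c'' ∧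
      W.cell (μ.card - 2) = d ∧ swapEq W W' (μ.card - 1) μ.card := by
  have hc''₁ : Maximal (· ∈ (μ.eraseMaximal hc).cells) c'' := by
    rw [cells_eraseMaximal]
    exact Finset.maximal_mem_erase hc'' hne
  have hc₁ : Maximal (· ∈ (μ.eraseMaximal hc'').cells) c := by
    rw [cells_eraseMaximal]
    exact Finset.maximal_mem_erase hc hne.symm
  set ν₂ := (μ.eraseMaximal hc).eraseMaximal hc''₁
  have hcomm : ν₂.cells = (μ.eraseMaximal hc'').cells.erase c := by
    simp only [ν₂, cells_eraseMaximal]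
    exact erase_right_comm
  have hd₂ : Maximal (· ∈ ν₂.cells) d := by simpa only [ν₂, cells_eraseMaximal]
  obtain ⟨T₂, hT₂⟩ := exists_cell_card_eq hd₂
  have hcard₁ := card_of_cells_eq_erase hc.1 (cells_eraseMaximal μ hc)
  have hcard₂ := card_of_cells_eq_erase (ν := ν₂) hc''₁.1 (cells_eraseMaximal _ hc''₁)
  have hcard₃ : 0 < ν₂.card := card_pos.2 ⟨d, hd₂.1⟩
  have hW (a : ℕ) (h1 : 1 ≤ a) (h2 : a ≤ μ.card) :=
    cell_extend_extend T₂ hc''₁ hc (cells_eraseMaximal _ _) (cells_eraseMaximal _ _) h1 h2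
  have hW' (a : ℕ) (h1 : 1 ≤ a) (h2 : a ≤ μ.card) :=
    cell_extend_extend T₂ hc₁ hc'' hcomm (cells_eraseMaximal _ _) h1 h2
  refine ⟨(T₂.extend c'' hc''₁ (cells_eraseMaximal _ _)).extend c hc (cells_eraseMaximal _ _),
    (T₂.extend c hc₁ hcomm).extend c'' hc'' (cells_eraseMaximal _ _), by omega,
    extend_cell_card _ _ _ _, ?_, ?_, fun x hx1 hx2 => ?_⟩
  · rw [hW _ (by omega) (by omega), if_neg (by omega), if_pos rfl]
  · rw [hW _ (by omega) (by omega), if_neg (by omega), if_neg (by omega),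
      show μ.card - 2 = ν₂.card by omega, hT₂]
  · rw [hW _ (by omega) le_rfl, hW _ (by omega) (by omega), hW' _ hx1 hx2, hW _ hx1 hx2]
    split_ifs <;> first | rfl | omega

/-- With `|μ| - 2` in `d` and the two largest entries in `c''` and `c`, the letter `|μ| - 2` is read
between the other two, so exchanging the two largest entries is an elementary dual equivalence. -/
theorem exists_edge_of_readBefore {c c'' d : ℕ × ℕ} (hc : Maximal (· ∈ μ.cells) c)
    (hc'' : Maximal (· ∈ μ.cells) c'') (hd : Maximal (· ∈ (μ.cells.erase c).erase c'') d)
    (h1 : readBefore c'' d) (h2 : readBefore d c) :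
    ∃ W W' : SYT μ, W.cell μ.card = c ∧ W'.cell μ.card = c'' ∧
      ∃ i, (stdDEG μ.card μ rfl).edge i W W' := by
  have hne : c'' ≠ c := by
    rintro rfl
    exact readBefore_asymm (readBefore_trans h1 h2) (readBefore_trans h1 h2)
  obtain ⟨W, W', hn, hWn, hWn1, hWn2, hswap⟩ := exists_swapEq_of_maximal hc hc'' hne hd
  have hW'n : W'.cell μ.card = c'' := by
    rw [hswap _ (by omega) le_rfl, if_neg (by omega), if_pos rfl, hWn1]
  refine ⟨W, W', hWn, hW'n, μ.card - 1, fun h => hne (hW'n ▸ hWn ▸ by rw [h]),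
    .inl ⟨by omega, by omega, .inr ⟨?_, by rwa [Nat.sub_add_cancel (by omega)]⟩⟩⟩
  unfold posBetween
  rw [show μ.card - 1 - 1 = μ.card - 2 by omega, Nat.sub_add_cancel (by omega), hWn, hWn1, hWn2]
  exact .inl ⟨h1, h2⟩

theorem exists_edge_lower {c : ℕ × ℕ} (hc : Maximal (· ∈ μ.cells) c)
    (hbelow : (c.1 + 1, 0) ∈ μ.cells) :
    ∃ W W' : SYT μ, W.cell μ.card = c ∧ c.1 < (W'.cell μ.card).1 ∧
      ∃ i, (stdDEG μ.card μ rfl).edge i W W' := by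
  obtain ⟨c'', hc'', hr, hrows⟩ := μ.exists_maximal_below hbelow
  obtain ⟨d, hd, h1, h2⟩ := μ.exists_maximal_between hc hc'' hr hrows
  obtain ⟨W, W', hW, hW', hedge⟩ := exists_edge_of_readBefore hc hc'' hd (.inl h1) (.inl h2)
  exact ⟨W, W', hW, hW' ▸ hr, hedge⟩

theorem stdDEG_reach {n : ℕ} (μ : YoungDiagram) (h : μ.card = n) (T U : SYT μ) :
    (stdDEG n μ h).Reach T U := by
  induction n using Nat.strong_induction_on generalizing μ with
  | _ n ih =>
  subst h
  rcases Nat.eq_zero_or_pos μ.card with h0 | hpos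
  · rw [(ext_cell fun a h1 h2 => by omega : T = U)]
    exact .refl
  have ih' (ν : YoungDiagram) (hν : ν.card < μ.card) := ih ν.card hν ν rfl
  -- Moved down as far as possible, the largest entry ends in the corner of the last row.
  have hbottom (T : SYT μ) : ∃ T', (stdDEG μ.card μ rfl).Reach T T' ∧
      ((T'.cell μ.card).1 + 1, 0) ∉ μ.cells := by
    have : Nonempty {U // (stdDEG μ.card μ rfl).Reach T U} := ⟨⟨T, .refl⟩⟩
    obtain ⟨⟨T', hT'⟩, hmax⟩ :=
      Finite.exists_max fun U : {U // (stdDEG μ.card μ rfl).Reach T U} => (U.1.cell μ.card).1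
    refine ⟨T', hT', fun hbelow => ?_⟩
    obtain ⟨W, W', hW, hlt, hedge⟩ := exists_edge_lower (T'.maximal_cell_card hpos) hbelow
    exact (hmax ⟨W', (hT'.trans (reach_of_cell_card_eq hpos ih' hW.symm)).tail hedge⟩).not_gt hlt
  obtain ⟨T', hT, hT'⟩ := hbottom T
  obtain ⟨U', hU, hU'⟩ := hbottom U
  exact hT.trans ((reach_of_cell_card_eq hpos ih' (eq_of_maximal_of_notMem_below
    (T'.maximal_cell_card hpos) (U'.maximal_cell_card hpos) hT' hU')).trans hU.symm)

end SYT

/-- If `λ` and `μ` are partitions of `n` and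
`φ : G_λ → G_μ` is an isomorphism of signed colored graphs between the
standard dual equivalence graphs, then `λ = μ` and `φ` is the identity. -/
theorem statement10 (n : ℕ) (lam mu : YoungDiagram) (hl : lam.card = n) (hm : mu.card = n)
    (φ : SYT lam → SYT mu)
    (hmor : SCG.IsMorphism (stdDEG n lam hl) (stdDEG n mu hm) φ)
    (hbij : Function.Bijective φ) :
    ∃ h : lam = mu, ∀ T : SYT lam, φ T = h ▸ T := by
  have hsgn (T : SYT lam) (i : ℕ) (h1 : 1 ≤ i) (h2 : i < n) : sytSgn (φ T) i = sytSgn T i :=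
    hmor.1 T i h1 h2
  obtain ⟨S, hS⟩ := hbij.2 (SYT.superstandard mu)
  obtain rfl : lam = mu := YoungDiagram.eq_of_card_filter_fst_lt_eq fun K => le_antisymm
    (SYT.card_filter_fst_lt_le_of_ascents _ (hl.trans hm.symm)
      (fun i h1 h2 h => (hsgn _ i h1 (by omega)).trans h) K)
    (SYT.card_filter_fst_lt_le_of_ascents S (hm.trans hl.symm)
      (fun i h1 h2 h => by rw [← hsgn S i h1 (by omega), hS, h]) K)
  have hfix : φ (SYT.superstandard lam) = SYT.superstandard lam :=
    SYT.eq_superstandard _ fun i h1 h2 h => (hsgn _ i h1 (by omega)).trans h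
  exact ⟨rfl, fun T => SCG.map_eq_self_of_reach hmor.2 (fun _ _ _ _ => stdDEG_edge_unique hl)
    (SYT.stdDEG_reach lam hl _ T) hfix⟩
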